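/- arXiv:2304.07078 — 5 statements merged into one kernel-verified Lean document; each statement's English description precedes it below -/
import Mathlib

section
/- Let A be a p-adically complete, p-torsion-free O_C-algebra containing a topologically nilpotent non-zero-divisor e, and ρ ∈ O_C with v_p(ρ) ≥ 1/(p−1). Let M = A[ρX]^∧_pd with γ acting by γ(X) = X + e. Then the image of (γ − 1) on M equals ρ·e·M; consequently the group cohomology H^1(Z_p·γ, M), computed by the two-term Koszul complex M → M, x ↦ γ(x) − x, is isomorphic to M/ρeM. -/
/-!
On coefficient sequences `a` (the element `∑ aᵢ (ρX)^[i]` of `A[ρX]^∧_pd`), `γ` acts as `f(eσ)`,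
where `σ` is the shift `a ↦ a (· + 1)` and `f = ∑ ρ^[m] Xᵐ`: indeed
`γ (ρX)^[n] = ∑ₖ (ρX)^[n-k] ρ^[k] eᵏ`. Every power series acts in this way,
multiplicatively, on all sequences, preserving null ones, because `e` is topologically nilpotent
and the topology is linear.
Legendre's formula and `v_p(ρ) ≥ 1/(p-1)` give `ρ ∣ ρ^[m]` for `m ≥ 1`, so `f - 1 = ρX·g` with
`g(0) = 1`. Hence `g` is a unit of `A⟦X⟧`, and `γ - 1 = ρe·σ∘g(eσ)` has image `ρe·M`, because
`g(eσ)` is bijective and `σ` is surjective on null sequences.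
-/

open Filter Topology PowerSeries Finset
open scoped Nat

instance IsLinearTopology.toNonarchimedeanAddGroup {R : Type*} [Ring R] [TopologicalSpace R]
    [IsTopologicalAddGroup R] [IsLinearTopology R R] : NonarchimedeanAddGroup R where
  is_nonarchimedean U hU := by
    obtain ⟨J, hJ, hJU⟩ := IsLinearTopology.hasBasis_open_ideal.mem_iff.mp hU
    exact ⟨⟨J.toAddSubgroup, hJ⟩, hJU⟩

theorem IsAdic.isLinearTopology {R : Type*} [CommRing R] [TopologicalSpace R] {I : Ideal R}
    (hI : IsAdic I) : IsLinearTopology R R :=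
  IsLinearTopology.mk_of_hasBasis R hI.hasBasis_nhds_zero

theorem tendsto_fst_add_snd_cofinite :
    Tendsto (fun kl : ℕ × ℕ => kl.1 + kl.2) cofinite cofinite :=
  Tendsto.cofinite_of_finite_preimage_singleton fun m =>
    (antidiagonal m).finite_toSet.subset fun _ hkl => HasAntidiagonal.mem_antidiagonal.mpr hkl

theorem tsum_sum_antidiagonal_eq_tsum {G : Type*} [AddCommGroup G] [UniformSpace G]
    [IsUniformAddGroup G] [CompleteSpace G] [T0Space G] {F : ℕ × ℕ → G} (hF : Summable F) :
    ∑' m, ∑ kl ∈ antidiagonal m, F kl = ∑' kl, F kl := by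
  have hσ : Summable fun c => F (HasAntidiagonal.sigmaAntidiagonalEquivProd c) :=
    (Equiv.summable_iff _).mpr hF
  rw [← HasAntidiagonal.sigmaAntidiagonalEquivProd.tsum_eq F, hσ.tsum_sigma]
  exact tsum_congr fun m => ((antidiagonal m).tsum_subtype F).symm

theorem PadicInt.isUnit_natCast_of_not_dvd {p : ℕ} [Fact p.Prime] {A : Type*} [CommRing A]
    [Algebra ℤ_[p] A] {u : ℕ} (hu : ¬p ∣ u) : IsUnit (u : A) := by
  have h : IsUnit (u : ℤ_[p]) := by
    rw [PadicInt.isUnit_iff, PadicInt.norm_def, PadicInt.coe_natCast,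
      Padic.norm_natCast_eq_one_iff]
    exact (Nat.Prime.coprime_iff_not_dvd Fact.out).mpr hu
  simpa using h.map (algebraMap ℤ_[p] A)

theorem dvd_of_factorial_mul_eq_pow {p : ℕ} [Fact p.Prime] {A : Type*} [CommRing A]
    [Algebra ℤ_[p] A] (hp : IsLeftRegular (p : A)) {ρ c : A} (hρ : ρ ^ (p - 1) = p * c)
    {m : ℕ} (hm : m ≠ 0) {x : A} (hx : (m ! : A) * x = ρ ^ m) : ρ ∣ x := by
  obtain ⟨v, u, hpu, hfac⟩ :=
    Nat.exists_eq_pow_mul_and_not_dvd (Nat.factorial_ne_zero m) p (Nat.Prime.ne_one Fact.out)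
  have hv : (p - 1) * v < m := by
    have hle : v ≤ padicValNat p m ! :=
      (padicValNat_dvd_iff_le (Nat.factorial_ne_zero m)).mp (hfac ▸ dvd_mul_right _ _)
    exact lt_of_le_of_lt (Nat.mul_le_mul_left _ hle)
      (sub_one_mul_padicValNat_factorial_lt_of_ne_zero p hm)
  have hux : (u : A) * x = c ^ v * ρ ^ (m - (p - 1) * v) := by
    refine hp.pow v ?_
    calc (p : A) ^ v * (u * x) = ρ ^ m := by rw [← hx, hfac]; push_cast; ring
      _ = (ρ ^ (p - 1)) ^ v * ρ ^ (m - (p - 1) * v) := by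
        rw [← pow_mul, ← pow_add]; congr 1; omega
      _ = (p : A) ^ v * (c ^ v * ρ ^ (m - (p - 1) * v)) := by rw [hρ]; ring
  rw [← (PadicInt.isUnit_natCast_of_not_dvd (A := A) hpu).dvd_mul_left, hux]
  exact (dvd_pow_self ρ (by omega)).mul_left _

section EvalShift

variable {A : Type*} [CommRing A] [TopologicalSpace A]

/-- `evalShift e f a` is `f(eσ) a`, where `σ a = a (· + 1)` is the shift. -/
noncomputable def evalShift (e : A) (f : PowerSeries A) (a : ℕ → A) (i : ℕ) : A :=
  ∑' m, coeff m f * e ^ m * a (i + m)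

theorem evalShift_one [T2Space A] (e : A) (a : ℕ → A) : evalShift e 1 a = a := by
  ext i
  rw [evalShift, tsum_eq_single 0 fun m hm => by simp [coeff_one, hm]]
  simp

theorem tendsto_evalShift [IsTopologicalAddGroup A] [IsLinearTopology A A] (e : A)
    (f : PowerSeries A) {a : ℕ → A} (ha : Tendsto a atTop (𝓝 0)) :
    Tendsto (evalShift e f a) atTop (𝓝 0) := by
  refine IsLinearTopology.hasBasis_open_ideal.tendsto_right_iff.mpr fun J hJ => ?_
  have hJclosed : IsClosed (J : Set A) := AddSubgroup.isClosed_of_isOpen J.toAddSubgroup hJ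
  filter_upwards [eventually_forall_ge_atTop.mpr (ha.eventually (hJ.mem_nhds J.zero_mem))]
    with i hi using tsum_mem hJclosed fun m => J.mul_mem_left _ (hi _ (Nat.le_add_right i m))

end EvalShift

section EvalShiftComplete

variable {A : Type*} [CommRing A] [UniformSpace A] [IsUniformAddGroup A] [IsLinearTopology A A]
  [CompleteSpace A] {e : A}

theorem summable_evalShift_terms (he : IsTopologicallyNilpotent e) (f : PowerSeries A)
    (a : ℕ → A) (i : ℕ) : Summable fun m => coeff m f * e ^ m * a (i + m) := by
  refine NonarchimedeanAddGroup.summable_of_tendsto_cofinite_zero ?_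
  rw [Nat.cofinite_eq_atTop]
  exact IsLinearTopology.tendsto_mul_zero_of_left _ _
    (IsLinearTopology.tendsto_mul_zero_of_right _ _ he)

variable [IsTopologicalRing A] [T2Space A]

theorem evalShift_mul (he : IsTopologicallyNilpotent e) (f g : PowerSeries A) (a : ℕ → A) :
    evalShift e (f * g) a = evalShift e f (evalShift e g a) := by
  ext i
  set F : ℕ × ℕ → A := fun kl =>
    coeff kl.1 f * coeff kl.2 g * (e ^ (kl.1 + kl.2) * a (i + (kl.1 + kl.2)))
  have hF : Summable F := by
    have h : Tendsto (fun m => e ^ m * a (i + m)) cofinite (𝓝 0) := by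
      rw [Nat.cofinite_eq_atTop]
      exact IsLinearTopology.tendsto_mul_zero_of_left _ _ he
    exact NonarchimedeanAddGroup.summable_of_tendsto_cofinite_zero
      (IsLinearTopology.tendsto_mul_zero_of_right _ _ (h.comp tendsto_fst_add_snd_cofinite))
  calc evalShift e (f * g) a i = ∑' m, ∑ kl ∈ antidiagonal m, F kl := by
        simp only [evalShift, coeff_mul, Finset.sum_mul, F]
        refine tsum_congr fun m => Finset.sum_congr rfl fun kl hkl => ?_
        rw [HasAntidiagonal.mem_antidiagonal.mp hkl, mul_assoc]
    _ = ∑' k, ∑' l, F (k, l) := (tsum_sum_antidiagonal_eq_tsum hF).trans hF.tsum_prod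
    _ = evalShift e f (evalShift e g a) i := by
        refine tsum_congr fun k => ?_
        rw [evalShift, ← (summable_evalShift_terms he g a (i + k)).tsum_mul_left]
        refine tsum_congr fun l => ?_
        simp only [F, pow_add, add_assoc]
        ring

theorem evalShift_C_add_C_mul_X_mul (he : IsTopologicallyNilpotent e) (c r : A)
    (g : PowerSeries A) (a : ℕ → A) (i : ℕ) :
    evalShift e (C c + C r * X * g) a i = c * a i + r * e * evalShift e g a (i + 1) := by
  rw [evalShift, (summable_evalShift_terms he _ a i).tsum_eq_zero_add, evalShift,
    ← (summable_evalShift_terms he g a (i + 1)).tsum_mul_left]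
  congr 1
  · simp
  · refine tsum_congr fun m => ?_
    simp only [map_add, coeff_C, mul_assoc, coeff_C_mul, coeff_succ_X_mul]
    rw [show i + (m + 1) = i + 1 + m by omega, pow_succ]
    simp
    ring

end EvalShiftComplete

theorem stmt_3_general (p : ℕ) [Fact (Nat.Prime p)]
    (A : Type*) [CommRing A] [UniformSpace A] [IsUniformAddGroup A]
    [IsTopologicalRing A] [CompleteSpace A] [T2Space A]
    [Algebra ℤ_[p] A]
    (hadic : IsAdic (Ideal.span {(p : A)}))
    (htor : ∀ x : A, (p : A) * x = 0 → x = 0)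
    (ρ : A) (hρ : ∃ c : A, ρ ^ (p - 1) = (p : A) * c)
    (ρpd : ℕ → A) (hρpd0 : ρpd 0 = 1) (hρpd1 : ρpd 1 = ρ)
    (hρpdfac : ∀ m : ℕ, (m.factorial : A) * ρpd m = ρ ^ m)
    (e : A) (he : Tendsto (fun n : ℕ => e ^ n) atTop (𝓝 0)) :
    ∀ b : ℕ → A, Tendsto b atTop (𝓝 0) →
      ((∃ a : ℕ → A, Tendsto a atTop (𝓝 0) ∧
          ∀ i : ℕ, (∑' m : ℕ, ρpd m * e ^ m * a (i + m)) - a i = b i) ↔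
        (∃ c : ℕ → A, Tendsto c atTop (𝓝 0) ∧ ∀ i : ℕ, b i = ρ * e * c i)) := by
  intro b _
  have := hadic.isLinearTopology
  obtain ⟨c₀, hc₀⟩ := hρ
  choose q hq using fun m : ℕ => dvd_of_factorial_mul_eq_pow
    (isLeftRegular_iff_right_eq_zero_of_mul.mpr htor) hc₀ m.succ_ne_zero (hρpdfac (m + 1))
  set g := mk (Function.update q 0 1)
  have hγ : mk ρpd = C 1 + C ρ * X * g := by
    ext (_ | m)
    · simp [hρpd0]
    · rcases m with _ | m <;> simp [g, hρpd1, mul_assoc, coeff_succ_X_mul, hq]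
  have hg : IsUnit g := by
    rw [isUnit_iff_constantCoeff, ← coeff_zero_eq_constantCoeff_apply, coeff_mk,
      Function.update_self]
    exact isUnit_one
  have key (a : ℕ → A) (i : ℕ) :
      (∑' m, ρpd m * e ^ m * a (i + m)) - a i = ρ * e * evalShift e g a (i + 1) := by
    have hγa : (∑' m, ρpd m * e ^ m * a (i + m)) = evalShift e (mk ρpd) a i := by
      simp only [evalShift, coeff_mk]
    rw [hγa, hγ, evalShift_C_add_C_mul_X_mul he]
    ring
  constructor
  · rintro ⟨a, ha, hab⟩
    exact ⟨fun i => evalShift e g a (i + 1),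
      (tendsto_evalShift e g ha).comp (tendsto_add_atTop_nat 1), fun i => by rw [← hab, key]⟩
  · rintro ⟨c, hc, hbc⟩
    obtain ⟨h, hgh⟩ := hg.exists_right_inv
    refine ⟨evalShift e h fun i => c (i - 1),
      tendsto_evalShift e h (hc.comp (tendsto_sub_atTop_nat 1)), fun i => ?_⟩
    rw [key, ← evalShift_mul he, hgh, evalShift_one, hbc, Nat.add_sub_cancel]

/-- With `A` a `p`-adically complete, `p`-torsion-free `𝒪_C`-algebra
(modelled as a `ℤ_p`-algebra), `e ∈ A` a topologically nilpotent non-zero-divisor,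
`ρ` with `v_p(ρ) ≥ 1/(p−1)`, and `M = A[ρX]^∧_pd` (coefficient sequences tending to `0`)
with `γ(X) = X + e`, the image of `γ − 1` on `M` equals `ρ·e·M`; consequently
`H¹(ℤ_p·γ, M)`, computed by the two-term Koszul complex `M → M, x ↦ γ(x) − x`,
is isomorphic to `M/ρeM`. -/
theorem stmt_3 (p : ℕ) [Fact (Nat.Prime p)]
    (A : Type*) [CommRing A] [UniformSpace A] [IsUniformAddGroup A]
    [IsTopologicalRing A] [CompleteSpace A] [T2Space A]
    [Algebra ℤ_[p] A]
    (hadic : IsAdic (Ideal.span {(p : A)}))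
    (htor : ∀ x : A, (p : A) * x = 0 → x = 0)
    (ρ : A) (hρ : ∃ c : A, ρ ^ (p - 1) = (p : A) * c)
    (ρpd : ℕ → A) (hρpd0 : ρpd 0 = 1) (hρpd1 : ρpd 1 = ρ)
    (hρpdfac : ∀ m : ℕ, (m.factorial : A) * ρpd m = ρ ^ m)
    (e : A) (he : Tendsto (fun n : ℕ => e ^ n) atTop (𝓝 0))
    (hereg : ∀ x : A, e * x = 0 → x = 0) :
    ∀ b : ℕ → A, Tendsto b atTop (𝓝 0) →
      ((∃ a : ℕ → A, Tendsto a atTop (𝓝 0) ∧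
          ∀ i : ℕ, (∑' m : ℕ, ρpd m * e ^ m * a (i + m)) - a i = b i) ↔
        (∃ c : ℕ → A, Tendsto c atTop (𝓝 0) ∧ ∀ i : ℕ, b i = ρ * e * c i)) :=
  stmt_3_general p A hadic htor ρ hρ ρpd hρpd0 hρpd1 hρpdfac e he
end

section
/- Let A be a p-adically complete p-torsion-free O_C-algebra with topologically nilpotent non-zero-divisor e, ρ ∈ O_C with v_p(ρ) ≥ 1/(p−1), and α ∈ Z[1/p] ∩ (0,1). Let M_α = A[ρX]^∧_pd · e_α with γ acting by γ(X) = X + e and γ(e_α) = ζ^α e_α, where ζ^α is the corresponding root of unity (so ζ^α ≠ 1 and v_p(ζ^α − 1) ≤ 1/(p−1)). Then the γ-fixed points of M_α are zero, and (γ − 1)M_α = (ζ^α − 1)M_α, hence H^1 of the Koszul complex (M_α, γ − 1) is M_α/(ζ^α − 1)M_α. -/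
/-!
Identify an element of `M_α` with the null sequence `a` of its coefficients. Every divided power
`ρ^[m]`, `m ≥ 1`, is divisible by `ζ^α - 1`: from `m! ρ^[m] = ρ^m` and `p ∣ ρ^(p-1)` one gets
`u ρ^[m] ∈ ρA` for the prime-to-`p` part `u` of `m!`, and `u` is invertible modulo `ζ^α - 1`
because `ζ^α - 1` divides `p^r`. Hence `γ - 1 = (ζ^α - 1)(1 - eT)` for a strictly upper
triangular Toeplitz operator `T` with null coefficients, and since `e` is topologically nilpotent,
`1 - eT` is bijective on null sequences, with inverse `∑ eⁿTⁿ`. As `ζ^α - 1` is a non-zero-divisor,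
both claims follow.
-/

open Filter Topology IsLinearTopology
open scoped Nat

section Divisibility

variable {R : Type*} [CommRing R]

theorem sub_one_dvd_natCast_of_pow_eq_one_of_isLeftRegular {ζ : R} {n : ℕ} (hζ : ζ ^ n = 1)
    (hreg : IsLeftRegular (ζ - 1)) : ζ - 1 ∣ (n : R) := by
  have hgeom : ∑ k ∈ Finset.range n, ζ ^ k = 0 :=
    hreg (by simp [mul_comm (ζ - 1), geom_sum_mul, hζ])
  have hn : (n : R) = ∑ k ∈ Finset.range n, -(ζ ^ k - 1) := by
    simp [Finset.sum_sub_distrib, hgeom]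
  rw [hn]
  exact Finset.dvd_sum fun k _ => (sub_one_dvd_pow_sub_one ζ k).neg_right

theorem dvd_of_dvd_natCast_mul_of_coprime {z x : R} {u n : ℕ} (hn : z ∣ (n : R))
    (hun : u.Coprime n) (h : z ∣ u * x) : z ∣ x :=
  ((hun.cast (R := R)).of_isCoprime_of_dvd_right hn).symm.dvd_of_dvd_mul_left h

variable {p : ℕ} [Fact p.Prime]

theorem dvd_ordCompl_factorial_mul (hp : IsLeftRegular (p : R)) {ρ y : R}
    (hρ : (p : R) ∣ ρ ^ (p - 1)) {m : ℕ} (hm : m ≠ 0) (hy : (m ! : R) * y = ρ ^ m) :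
    ρ ∣ (ordCompl[p] m ! : R) * y := by
  obtain ⟨c, hc⟩ := hρ
  have hfac : (p : R) ^ (m !).factorization p * (ordCompl[p] m ! : R) = m ! := by
    rw [← Nat.cast_pow, ← Nat.cast_mul, Nat.ordProj_mul_ordCompl_eq_self]
  have hv : (p - 1) * (m !).factorization p < m := by
    rw [Nat.factorization_def _ Fact.out]
    exact sub_one_mul_padicValNat_factorial_lt_of_ne_zero p hm
  generalize (ordCompl[p] m ! : R) = u at hfac ⊢
  generalize (m !).factorization p = v at hfac hv
  have hcancel : (p : R) ^ v * (u * y) = (p : R) ^ v * (c ^ v * ρ ^ (m - (p - 1) * v)) :=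
    calc (p : R) ^ v * (u * y) = (m ! : R) * y := by rw [← mul_assoc, hfac]
      _ = (ρ ^ (p - 1)) ^ v * ρ ^ (m - (p - 1) * v) := by
          rw [hy, ← pow_mul, ← pow_add]; congr 1; omega
      _ = (p : R) ^ v * (c ^ v * ρ ^ (m - (p - 1) * v)) := by rw [hc]; ring
  rw [hp.pow v hcancel]
  exact (dvd_pow_self ρ (by omega)).mul_left _

theorem sub_one_dvd_of_factorial_mul_eq_pow (hp : IsLeftRegular (p : R)) {r : ℕ} {ρ ζ y : R}
    (hρ : (p : R) ∣ ρ ^ (p - 1)) (hζ : ζ ^ p ^ r = 1) (hζreg : IsLeftRegular (ζ - 1))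
    (hζρ : ζ - 1 ∣ ρ) {m : ℕ} (hm : m ≠ 0) (hy : (m ! : R) * y = ρ ^ m) : ζ - 1 ∣ y :=
  dvd_of_dvd_natCast_mul_of_coprime
    (sub_one_dvd_natCast_of_pow_eq_one_of_isLeftRegular hζ hζreg)
    ((Nat.coprime_ordCompl Fact.out (Nat.factorial_ne_zero m)).symm.pow_right r)
    (hζρ.trans (dvd_ordCompl_factorial_mul hp hρ hm hy))

end Divisibility

noncomputable def strictUpperToeplitz {A : Type*} [CommRing A] [TopologicalSpace A]
    (v a : ℕ → A) (i : ℕ) : A :=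
  ∑' m, v m * a (i + m + 1)

section LinearTopology

variable {A : Type*} [CommRing A] [TopologicalSpace A] [IsTopologicalAddGroup A]
  [IsLinearTopology A A]

theorem tendsto_strictUpperToeplitz (v : ℕ → A) {a : ℕ → A} (ha : Tendsto a atTop (𝓝 0)) :
    Tendsto (strictUpperToeplitz v a) atTop (𝓝 0) := by
  rw [hasBasis_open_ideal.tendsto_right_iff]
  intro I hI
  obtain ⟨N, hN⟩ := eventually_atTop.mp (ha.eventually_mem (hI.mem_nhds I.zero_mem))
  filter_upwards [eventually_ge_atTop N] with i hi
  exact tsum_mem (I.toAddSubgroup.isClosed_of_isOpen hI)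
    fun m => I.mul_mem_left _ (hN _ (by omega))

theorem tendsto_iterate_strictUpperToeplitz (v : ℕ → A) {a : ℕ → A}
    (ha : Tendsto a atTop (𝓝 0)) (n : ℕ) :
    Tendsto ((strictUpperToeplitz v)^[n] a) atTop (𝓝 0) := by
  induction n with
  | zero => exact ha
  | succ n ih =>
    rw [Function.iterate_succ_apply']
    exact tendsto_strictUpperToeplitz v ih

theorem tendsto_tsum_pow_mul {e : A} (he : Tendsto (e ^ ·) atTop (𝓝 0)) {y : ℕ → ℕ → A}
    (hy : ∀ n, Tendsto (y n) atTop (𝓝 0)) :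
    Tendsto (fun i => ∑' n, e ^ n * y n i) atTop (𝓝 0) := by
  rw [hasBasis_open_ideal.tendsto_right_iff]
  intro I hI
  obtain ⟨N, hN⟩ := eventually_atTop.mp (he.eventually_mem (hI.mem_nhds I.zero_mem))
  filter_upwards [(Set.finite_lt_nat N).eventually_all.mpr
    fun n _ => (hy n).eventually_mem (hI.mem_nhds I.zero_mem)] with i hi
  refine tsum_mem (I.toAddSubgroup.isClosed_of_isOpen hI) fun n => ?_
  rcases lt_or_ge n N with hn | hn
  · exact I.mul_mem_left _ (hi n hn)
  · exact I.mul_mem_right _ (hN n hn)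

end LinearTopology

section Complete

variable {A : Type*} [CommRing A] [UniformSpace A] [IsUniformAddGroup A] [CompleteSpace A]
  [NonarchimedeanAddGroup A] [IsLinearTopology A A]

theorem summable_mul_of_tendsto_zero_right (f : ℕ → A) {g : ℕ → A}
    (hg : Tendsto g atTop (𝓝 0)) : Summable fun n => f n * g n :=
  NonarchimedeanAddGroup.summable_of_tendsto_cofinite_zero
    (Nat.cofinite_eq_atTop ▸ tendsto_mul_zero_of_right f g hg)

theorem summable_mul_of_tendsto_zero_left {f : ℕ → A} (hf : Tendsto f atTop (𝓝 0))
    (g : ℕ → A) : Summable fun n => f n * g n :=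
  NonarchimedeanAddGroup.summable_of_tendsto_cofinite_zero
    (Nat.cofinite_eq_atTop ▸ tendsto_mul_zero_of_left f g hf)

theorem summable_mul_shift (v : ℕ → A) {a : ℕ → A} (ha : Tendsto a atTop (𝓝 0)) (i : ℕ) :
    Summable fun m => v m * a (i + m + 1) :=
  summable_mul_of_tendsto_zero_right v
    (ha.comp (tendsto_atTop_mono (fun m => show m ≤ i + m + 1 by omega) tendsto_id))

variable [IsTopologicalRing A] [T2Space A]

theorem strictUpperToeplitz_smul (v : ℕ → A) {a : ℕ → A} (ha : Tendsto a atTop (𝓝 0)) (y : A) :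
    strictUpperToeplitz v (y • a) = y • strictUpperToeplitz v a := by
  funext i
  simp only [strictUpperToeplitz, Pi.smul_apply, smul_eq_mul]
  rw [← (summable_mul_shift v ha i).tsum_mul_left]
  exact tsum_congr fun m => mul_left_comm _ _ _

theorem eq_zero_of_sub_smul_strictUpperToeplitz_eq_zero {e : A}
    (he : Tendsto (e ^ ·) atTop (𝓝 0)) (v : ℕ → A) {a : ℕ → A} (ha : Tendsto a atTop (𝓝 0))
    (h : a - e • strictUpperToeplitz v a = 0) : a = 0 := by
  have hpow : ∀ n, a = e ^ n • (strictUpperToeplitz v)^[n] a := by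
    intro n
    induction n with
    | zero => simp
    | succ n ih =>
      calc a = e • strictUpperToeplitz v a := sub_eq_zero.mp h
        _ = e • strictUpperToeplitz v (e ^ n • (strictUpperToeplitz v)^[n] a) := by rw [← ih]
        _ = e ^ (n + 1) • (strictUpperToeplitz v)^[n + 1] a := by
          rw [strictUpperToeplitz_smul v (tendsto_iterate_strictUpperToeplitz v ha n), smul_smul,
            ← pow_succ', Function.iterate_succ_apply']
  funext i
  exact tendsto_nhds_unique tendsto_const_nhds
    ((tendsto_mul_zero_of_left _ (fun n => (strictUpperToeplitz v)^[n] a i) he).congr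
      fun n => (congrFun (hpow n) i).symm)

theorem strictUpperToeplitz_tsum_pow_mul {e : A} (he : Tendsto (e ^ ·) atTop (𝓝 0)) {v : ℕ → A}
    (hv : Tendsto v atTop (𝓝 0)) {y : ℕ → ℕ → A} (hy : ∀ n, Tendsto (y n) atTop (𝓝 0))
    (i : ℕ) :
    strictUpperToeplitz v (fun j => ∑' n, e ^ n * y n j) i
      = ∑' n, e ^ n * strictUpperToeplitz v (y n) i := by
  have hunc : Summable (Function.uncurry fun m n => v m * (e ^ n * y n (i + m + 1))) := by
    have hve := tendsto_mul_cofinite_nhds_zero (Nat.cofinite_eq_atTop ▸ hv)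
      (Nat.cofinite_eq_atTop ▸ he)
    refine NonarchimedeanAddGroup.summable_of_tendsto_cofinite_zero
      ((tendsto_mul_zero_of_left _ (fun q => y q.2 (i + q.1 + 1)) hve).congr
        fun q => mul_assoc _ _ _)
  have hrow (m : ℕ) : Summable fun n => v m * (e ^ n * y n (i + m + 1)) :=
    (summable_mul_of_tendsto_zero_left he _).mul_left _
  have hcol (n : ℕ) : Summable fun m => v m * (e ^ n * y n (i + m + 1)) :=
    summable_mul_shift v (tendsto_mul_zero_of_right (fun _ => e ^ n) _ (hy n)) i
  calc ∑' m, v m * ∑' n, e ^ n * y n (i + m + 1)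
      = ∑' m, ∑' n, v m * (e ^ n * y n (i + m + 1)) :=
        tsum_congr fun m => ((summable_mul_of_tendsto_zero_left he _).tsum_mul_left _).symm
    _ = ∑' n, ∑' m, v m * (e ^ n * y n (i + m + 1)) := (hunc.tsum_comm' hrow hcol).symm
    _ = ∑' n, e ^ n * ∑' m, v m * y n (i + m + 1) := tsum_congr fun n => by
        rw [← (summable_mul_shift v (hy n) i).tsum_mul_left]
        exact tsum_congr fun m => mul_left_comm _ _ _

theorem exists_sub_smul_strictUpperToeplitz_eq {e : A} (he : Tendsto (e ^ ·) atTop (𝓝 0))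
    {v : ℕ → A} (hv : Tendsto v atTop (𝓝 0)) {c : ℕ → A} (hc : Tendsto c atTop (𝓝 0)) :
    ∃ a, Tendsto a atTop (𝓝 0) ∧ a - e • strictUpperToeplitz v a = c := by
  have hTc := tendsto_iterate_strictUpperToeplitz v hc
  refine ⟨fun i => ∑' n, e ^ n * (strictUpperToeplitz v)^[n] c i, tendsto_tsum_pow_mul he hTc,
    funext fun i => ?_⟩
  have hshift : e * strictUpperToeplitz v (fun j => ∑' n, e ^ n * (strictUpperToeplitz v)^[n] c j) i
      = ∑' n, e ^ (n + 1) * (strictUpperToeplitz v)^[n + 1] c i := by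
    rw [strictUpperToeplitz_tsum_pow_mul he hv hTc,
      ← (summable_mul_of_tendsto_zero_left he _).tsum_mul_left]
    exact tsum_congr fun n => by rw [pow_succ', mul_assoc, Function.iterate_succ_apply']
  rw [Pi.sub_apply, Pi.smul_apply, smul_eq_mul, hshift,
    (summable_mul_of_tendsto_zero_left he _).tsum_eq_zero_add]
  simp

theorem mul_tsum_sub_eq_sub_one_mul {ζ e : A} {ρpd d a : ℕ → A} (h0 : ρpd 0 = 1)
    (hd : ∀ m, ρpd (m + 1) = (ζ - 1) * d m) (ha : Tendsto a atTop (𝓝 0)) (i : ℕ) :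
    ζ * ∑' m, ρpd m * e ^ m * a (i + m) - a i
      = (ζ - 1) * (a - e • strictUpperToeplitz (fun m => -(ζ * d m * e ^ m)) a) i := by
  have hsum : Summable fun m => ρpd m * e ^ m * a (i + m) :=
    summable_mul_of_tendsto_zero_right _
      (ha.comp (tendsto_atTop_mono (fun m => show m ≤ i + m by omega) tendsto_id))
  have hS : Summable fun m => d m * e ^ m * a (i + m + 1) := summable_mul_shift _ ha i
  have htail : ∑' m, ρpd (m + 1) * e ^ (m + 1) * a (i + (m + 1))
      = (ζ - 1) * e * ∑' m, d m * e ^ m * a (i + m + 1) := by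
    rw [← hS.tsum_mul_left]
    exact tsum_congr fun m => by rw [hd, ← add_assoc]; ring
  have hT : strictUpperToeplitz (fun m => -(ζ * d m * e ^ m)) a i
      = -(ζ * ∑' m, d m * e ^ m * a (i + m + 1)) := by
    rw [← hS.tsum_mul_left, ← tsum_neg]
    exact tsum_congr fun m => by ring
  rw [hsum.tsum_eq_zero_add, htail, Pi.sub_apply, Pi.smul_apply, smul_eq_mul, hT, h0, pow_zero,
    add_zero]
  ring

end Complete

theorem stmt_4_general (p : ℕ) [Fact (Nat.Prime p)]
    (A : Type*) [CommRing A] [UniformSpace A] [IsUniformAddGroup A]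
    [IsTopologicalRing A] [CompleteSpace A] [T2Space A]
    (hadic : IsAdic (Ideal.span {(p : A)}))
    (htor : ∀ x : A, (p : A) * x = 0 → x = 0)
    (ρ : A) (hρ : ∃ c : A, ρ ^ (p - 1) = (p : A) * c)
    (ρpd : ℕ → A) (hρpd0 : ρpd 0 = 1)
    (hρpdfac : ∀ m : ℕ, (m.factorial : A) * ρpd m = ρ ^ m)
    (e : A) (he : Tendsto (fun n : ℕ => e ^ n) atTop (𝓝 0))
    (r : ℕ)
    (ζα : A) (hζαroot : ζα ^ (p ^ r) = 1)
    (hζαreg : ∀ x : A, (ζα - 1) * x = 0 → x = 0)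
    (hζαdvd : ∃ c : A, ρ = (ζα - 1) * c) :
    (∀ a : ℕ → A, Tendsto a atTop (𝓝 0) →
      ((∀ i : ℕ, ζα * (∑' m : ℕ, ρpd m * e ^ m * a (i + m)) = a i) ↔
        ∀ i : ℕ, a i = 0)) ∧
    (∀ b : ℕ → A, Tendsto b atTop (𝓝 0) →
      ((∃ a : ℕ → A, Tendsto a atTop (𝓝 0) ∧
          ∀ i : ℕ, ζα * (∑' m : ℕ, ρpd m * e ^ m * a (i + m)) - a i = b i) ↔
        (∃ c : ℕ → A, Tendsto c atTop (𝓝 0) ∧ ∀ i : ℕ, b i = (ζα - 1) * c i))) := by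
  have : IsLinearTopology A A := hadic ▸ Ideal.isLinearTopology _
  have : NonarchimedeanRing A := hadic ▸ Ideal.nonarchimedean _
  choose d hd using fun m => sub_one_dvd_of_factorial_mul_eq_pow
    (isLeftRegular_iff_right_eq_zero_of_mul.mpr htor) hρ hζαroot
    (isLeftRegular_iff_right_eq_zero_of_mul.mpr hζαreg) hζαdvd m.succ_ne_zero (hρpdfac (m + 1))
  obtain ⟨v, hv, key⟩ : ∃ v : ℕ → A, Tendsto v atTop (𝓝 0) ∧
      ∀ a : ℕ → A, Tendsto a atTop (𝓝 0) → ∀ i, ζα * ∑' m, ρpd m * e ^ m * a (i + m) - a i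
        = (ζα - 1) * (a - e • strictUpperToeplitz v a) i :=
    ⟨_, by simpa using (tendsto_mul_zero_of_right (fun m => ζα * d m) _ he).neg,
      fun a ha => mul_tsum_sub_eq_sub_one_mul hρpd0 hd ha⟩
  refine ⟨fun a ha => ⟨fun hfix => ?_, fun h0 i => by simp [h0]⟩, fun b _ => ⟨?_, ?_⟩⟩
  · refine congrFun (eq_zero_of_sub_smul_strictUpperToeplitz_eq_zero he v ha
      (funext fun i => hζαreg _ ?_))
    rw [← key a ha i, hfix i, sub_self]
  · rintro ⟨a, ha, hab⟩
    refine ⟨_, ?_, fun i => by rw [← hab, key a ha]⟩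
    have hL := ha.sub ((tendsto_strictUpperToeplitz v ha).const_smul e)
    rw [smul_zero, sub_zero] at hL
    exact hL
  · rintro ⟨c, hc, hbc⟩
    obtain ⟨a, ha, hac⟩ := exists_sub_smul_strictUpperToeplitz_eq he hv hc
    exact ⟨a, ha, fun i => by rw [key a ha, hac, hbc]⟩

/-- With `A` a `p`-adically complete `p`-torsion-free `𝒪_C`-algebra,
`e` topologically nilpotent non-zero-divisor, `ρ` with `v_p(ρ) ≥ 1/(p−1)`, and
`α ∈ ℤ[1/p] ∩ (0,1)`, let `M_α = A[ρX]^∧_pd · e_α` with `γ(X) = X + e` and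
`γ(e_α) = ζ^α e_α`, where `ζ^α` is a nontrivial `p^r`-th root of unity with
`v_p(ζ^α − 1) ≤ v_p(ρ)` (encoded by `(ζ^α − 1) ∣ ρ`).  Then the `γ`-fixed points of
`M_α` vanish, and `(γ − 1)M_α = (ζ^α − 1)M_α`; hence `H¹` of the Koszul complex
`(M_α, γ−1)` is `M_α/(ζ^α − 1)M_α`. -/
theorem stmt_4 (p : ℕ) [Fact (Nat.Prime p)]
    (A : Type*) [CommRing A] [UniformSpace A] [IsUniformAddGroup A]
    [IsTopologicalRing A] [CompleteSpace A] [T2Space A]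
    [Algebra ℤ_[p] A]
    (hadic : IsAdic (Ideal.span {(p : A)}))
    (htor : ∀ x : A, (p : A) * x = 0 → x = 0)
    (ρ : A) (hρ : ∃ c : A, ρ ^ (p - 1) = (p : A) * c)
    (ρpd : ℕ → A) (hρpd0 : ρpd 0 = 1) (hρpd1 : ρpd 1 = ρ)
    (hρpdfac : ∀ m : ℕ, (m.factorial : A) * ρpd m = ρ ^ m)
    (e : A) (he : Tendsto (fun n : ℕ => e ^ n) atTop (𝓝 0))
    (hereg : ∀ x : A, e * x = 0 → x = 0)
    (r : ℕ) (hr : 1 ≤ r)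
    (ζα : A) (hζαroot : ζα ^ (p ^ r) = 1) (hζαne : ζα ≠ 1)
    (hζαreg : ∀ x : A, (ζα - 1) * x = 0 → x = 0)
    (hζαdvd : ∃ c : A, ρ = (ζα - 1) * c) :
    (∀ a : ℕ → A, Tendsto a atTop (𝓝 0) →
      ((∀ i : ℕ, ζα * (∑' m : ℕ, ρpd m * e ^ m * a (i + m)) = a i) ↔
        ∀ i : ℕ, a i = 0)) ∧
    (∀ b : ℕ → A, Tendsto b atTop (𝓝 0) →
      ((∃ a : ℕ → A, Tendsto a atTop (𝓝 0) ∧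
          ∀ i : ℕ, ζα * (∑' m : ℕ, ρpd m * e ^ m * a (i + m)) - a i = b i) ↔
        (∃ c : ℕ → A, Tendsto c atTop (𝓝 0) ∧ ∀ i : ℕ, b i = (ζα - 1) * c i))) :=
  stmt_4_general p A hadic htor ρ hρ ρpd hρpd0 hρpdfac e he r ζα hζαroot hζαreg hζαdvd
end

section
/- Conversely, if there exists an integer n ≥ 1 such that Θ^n = ρ^n Θ' for some topologically nilpotent Θ' ∈ M_r(A), then ρ^{n−1}V ⊆ V_{Θ/ρ}: for every v ∈ V and every m ≥ 0, Θ^m(ρ^{n−1}v) ∈ ρ^m V, and ρ^{−m}Θ^m(ρ^{n−1}v) → 0 as m → ∞. -/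
open Filter Topology

/-!
Dividing `m = d n + l` with `0 ≤ l < n`, the hypothesis `Θ^n = ρ^n Θ'` gives
`Θ^m ρ^{n-1} = ρ^m · ρ^{n-1-l} Θ'^d Θ^l`, so `w m = ρ^{n-1-l} Θ'^d Θ^l v` is an exact witness.
Along each residue class `l` it tends to `0` because `Θ'^d` does, and there are only finitely
many residue classes.
-/

theorem Filter.Tendsto.of_tendsto_mul_add {X : Type*} {F : Filter X} {f : ℕ → X} {n : ℕ}
    (hn : 0 < n) (h : ∀ l < n, Tendsto (fun d => f (n * d + l)) atTop F) :
    Tendsto f atTop F := by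
  refine fun U hU => mem_map.2 ?_
  have hall : ∀ᶠ d in atTop, ∀ l : Fin n, f (n * d + l) ∈ U :=
    eventually_all.2 fun l => h l l.isLt hU
  obtain ⟨D, hD⟩ := eventually_atTop.1 hall
  filter_upwards [eventually_ge_atTop (n * D)] with m hm
  rw [← Nat.div_add_mod m n]
  exact hD (m / n) ((Nat.le_div_iff_mul_le hn).2 (by rwa [Nat.mul_comm])) ⟨m % n, Nat.mod_lt m hn⟩

theorem Matrix.pow_eq_smul_mul_pow_mod {ι R : Type*} [Fintype ι] [DecidableEq ι] [CommSemiring R]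
    {Θ Θ' : Matrix ι ι R} {ρ : R} {n : ℕ} (hΘn : Θ ^ n = ρ ^ n • Θ') (m : ℕ) :
    Θ ^ m = ρ ^ (n * (m / n)) • (Θ' ^ (m / n) * Θ ^ (m % n)) := by
  conv_lhs => rw [← Nat.div_add_mod m n]
  rw [pow_add, pow_mul, hΘn, smul_pow, ← pow_mul, Matrix.smul_mul]

theorem Matrix.tendsto_smul_pow_mul_mulVec_nhds_zero {ι R : Type*} [Fintype ι] [DecidableEq ι]
    [CommSemiring R] [TopologicalSpace R] [IsTopologicalSemiring R] {M : Matrix ι ι R}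
    (hM : ∀ i j, Tendsto (fun k : ℕ => (M ^ k) i j) atTop (𝓝 0)) (c : R) (B : Matrix ι ι R)
    (v : ι → R) : Tendsto (fun d : ℕ => c • (M ^ d * B).mulVec v) atTop (𝓝 0) := by
  have hcont : Continuous fun N : Matrix ι ι R => c • (N * B).mulVec v :=
    (continuous_const_smul c).comp
      ((continuous_id.matrix_mul continuous_const).matrix_mulVec continuous_const)
  simpa only [Function.comp_def, Matrix.zero_mul, Matrix.zero_mulVec, smul_zero] using
    (hcont.tendsto 0).comp (tendsto_pi_nhds.2 fun i => tendsto_pi_nhds.2 (hM i))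

theorem stmt_12_general (r : ℕ)
    (A : Type*) [CommRing A] [UniformSpace A]
    [IsTopologicalRing A]
    (ρ : A)
    (Θ : Matrix (Fin r) (Fin r) A)
    (n : ℕ) (hn : 1 ≤ n)
    (Θ' : Matrix (Fin r) (Fin r) A)
    (hΘ' : ∀ i j, Tendsto (fun k : ℕ => (Θ' ^ k) i j) atTop (𝓝 0))
    (hΘn : Θ ^ n = ρ ^ n • Θ') :
    ∀ v : Fin r → A,
      ∃ w : ℕ → Fin r → A,
        (∀ m : ℕ, ρ ^ m • w m = (Θ ^ m).mulVec (ρ ^ (n - 1) • v)) ∧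
        Tendsto w atTop (𝓝 0) := by
  intro v
  refine ⟨fun m => ρ ^ (n - 1 - m % n) • (Θ' ^ (m / n) * Θ ^ (m % n)).mulVec v, fun m => ?_, ?_⟩
  · have hm : m + (n - 1 - m % n) = n * (m / n) + (n - 1) := by
      have := Nat.div_add_mod m n
      have := Nat.mod_lt m hn
      omega
    rw [Matrix.pow_eq_smul_mul_pow_mod hΘn m, Matrix.smul_mulVec, Matrix.mulVec_smul, smul_smul,
      smul_smul, ← pow_add, ← pow_add, hm]
  · refine Tendsto.of_tendsto_mul_add hn fun l hl => ?_
    have hdiv (d : ℕ) : (n * d + l) / n = d := by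
      rw [Nat.mul_add_div hn, Nat.div_eq_of_lt hl, add_zero]
    have hmod (d : ℕ) : (n * d + l) % n = l := by
      rw [Nat.mul_add_mod, Nat.mod_eq_of_lt hl]
    simpa only [hdiv, hmod] using
      Matrix.tendsto_smul_pow_mul_mulVec_nhds_zero hΘ' (ρ ^ (n - 1 - l)) (Θ ^ l) v

/-- If `Θ ∈ M_r(A)` is topologically nilpotent and there is `n ≥ 1` with
`Θ^n = ρ^n Θ'` for some topologically nilpotent `Θ'`, then `ρ^{n−1} V ⊆ V_{Θ/ρ}`: for every
`v ∈ V = A^r` and every `m ≥ 0`, `Θ^m(ρ^{n−1}v) ∈ ρ^m V`, with witnesses tending to `0`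
as `m → ∞`. -/
theorem stmt_12 (p : ℕ) [Fact (Nat.Prime p)] (r : ℕ)
    (A : Type*) [CommRing A] [UniformSpace A] [IsUniformAddGroup A]
    [IsTopologicalRing A] [CompleteSpace A] [T2Space A]
    [Algebra ℤ_[p] A]
    (hadic : IsAdic (Ideal.span {(p : A)}))
    (htor : ∀ x : A, (p : A) * x = 0 → x = 0)
    (ρ : A) (hρsmall : ∃ c : A, ρ ^ (p - 1) = (p : A) * c)
    (hρreg : ∀ x : A, ρ * x = 0 → x = 0)
    (Θ : Matrix (Fin r) (Fin r) A)
    (hΘ : ∀ i j, Tendsto (fun k : ℕ => (Θ ^ k) i j) atTop (𝓝 0))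
    (n : ℕ) (hn : 1 ≤ n)
    (Θ' : Matrix (Fin r) (Fin r) A)
    (hΘ' : ∀ i j, Tendsto (fun k : ℕ => (Θ' ^ k) i j) atTop (𝓝 0))
    (hΘn : Θ ^ n = ρ ^ n • Θ') :
    ∀ v : Fin r → A,
      ∃ w : ℕ → Fin r → A,
        (∀ m : ℕ, ρ ^ m • w m = (Θ ^ m).mulVec (ρ ^ (n - 1) • v)) ∧
        Tendsto w atTop (𝓝 0) :=
  stmt_12_general r A ρ Θ n hn Θ' hΘ' hΘn
end

section
/- Let A be a p-adically complete p-torsion-free O_C-algebra, ρ ∈ O_C with v_p(ρ) ≥ 1/(p−1), e ∈ A topologically nilpotent and a non-zero divisor, and V a finite free rank-r A-module with γ acting by P = exp(−(ζ_p−1)Θ), Θ topologically nilpotent. Write M_0(V) = V ⊗_A A[ρX]^∧_pd and M_0^+(V) = V ⊗_A (⨁^∧_{n≥1} A ρ^n X^{[n]}). Define g_V: M_0(V) → M_0(V) by sending v⃗ ⊗ Σ_n b_n ρ^n X^{[n]} to v⃗ ⊗ Σ_{n≥1} a_n ρ^n X^{[n]} where a_{n+1} = b_n + Σ_{l≥1}(−1)^l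 Σ_{m_1,…,m_l ≥ 1} P^l b_{n+m_1+⋯+m_l} (ρ^{[m_1+1]}/ρ)⋯(ρ^{[m_l+1]}/ρ) e^{m_1+⋯+m_l}. Then g_V takes values in M_0^+(V) and induces an A-module isomorphism g_V: M_0(V) → M_0^+(V). -/
open Filter Topology

noncomputable section

/-- The matrices `Q_m = Σ_{l=1}^m Σ_{m_1+⋯+m_l=m, m_i≥1} (−1)^l P^l ∏_i (ρ^{[m_i+1]}/ρ)`
(with `ρq k = ρ^{[k+1]}/ρ`) appearing in the definition of `g_V`. -/
def QQmat (A : Type*) [CommRing A] (r : ℕ) (P : Matrix (Fin r) (Fin r) A)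
    (ρq : ℕ → A) (m : ℕ) : Matrix (Fin r) (Fin r) A :=
  ∑ l ∈ Finset.Icc 1 m,
    ∑ c ∈ (Finset.Nat.antidiagonalTuple l m).filter (fun c => ∀ i, 1 ≤ c i),
      (((-1 : A) ^ l) * ∏ i, ρq (c i)) • (P ^ l)

/-- The operator `g_V` of Construction 3.5: on coefficient sequences (w.r.t. the basis
`ρ^n X^{[n]}` of `M_0(V) = V ⊗_A A[ρX]^∧_pd`), `(g_V b)_0 = 0` and
`(g_V b)_{n+1} = b_n + Σ_{l≥1}(−1)^l Σ_{m_1,…,m_l≥1} P^l b_{n+m_1+⋯+m_l}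
(ρ^{[m_1+1]}/ρ)⋯(ρ^{[m_l+1]}/ρ) e^{m_1+⋯+m_l}`. -/
def gV (A : Type*) [CommRing A] [UniformSpace A] [IsUniformAddGroup A]
    [IsTopologicalRing A] (r : ℕ) (P : Matrix (Fin r) (Fin r) A)
    (ρq : ℕ → A) (e : A) (b : ℕ → Fin r → A) : ℕ → Fin r → A := fun k =>
  match k with
  | 0 => 0
  | n + 1 => fun j =>
      b n j + ∑' m : ℕ, e ^ (m + 1) * ((QQmat A r P ρq (m + 1)).mulVec (b (n + m + 1))) j

/-! Write `(g_V b)_{n+1} = b_n + T(b)_n` with `T(b)_n = Σ_{m ≥ 0} e^{m+1} Q_{m+1} b_{n+m+1}`.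
Since `T(b)` is divisible by `e`, the iterates `(-T)^k x` are multiples of `e^k`, so they tend to
`0` uniformly in the `p`-adic topology, whatever `x` is. Hence a fixed point of `-T` vanishes
(injectivity), and the Neumann series `Σ_k (-T)^k a` converges and solves `b + T(b) = a`
(surjectivity). As `T(b)_n` only involves `b_{n+1}, b_{n+2}, …`, both `T` and the Neumann series
preserve sequences tending to `0`. -/

open Matrix

namespace IsAdic

variable {A : Type*} [CommRing A] [TopologicalSpace A] {I : Ideal A} {α : Type*}

theorem tendsto_zero_iff (hI : IsAdic I) {l : Filter α} {f : α → A} :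
    Tendsto f l (𝓝 0) ↔ ∀ k, ∀ᶠ x in l, f x ∈ I ^ k := by
  simpa using hI.hasBasis_nhds_zero.tendsto_right_iff

theorem tendsto_pi_zero_iff (hI : IsAdic I) {ι : Type*} [Finite ι] {l : Filter α}
    {f : α → ι → A} : Tendsto f l (𝓝 0) ↔ ∀ k, ∀ᶠ x in l, ∀ j, f x j ∈ I ^ k := by
  simp only [tendsto_pi_nhds, Pi.zero_apply, hI.tendsto_zero_iff, eventually_all]
  exact forall_comm

theorem tendsto_mul_of_tendsto_zero (hI : IsAdic I) {l : Filter α} {f : α → A}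
    (hf : Tendsto f l (𝓝 0)) (g : α → A) : Tendsto (fun x => f x * g x) l (𝓝 0) :=
  hI.tendsto_zero_iff.2 fun k =>
    (hI.tendsto_zero_iff.1 hf k).mono fun _ hx => Ideal.mul_mem_right _ _ hx

theorem nonarchimedeanRing [IsTopologicalRing A] (hI : IsAdic I) : NonarchimedeanRing A where
  is_nonarchimedean U hU := by
    obtain ⟨k, -, hk⟩ := hI.hasBasis_nhds_zero.mem_iff.1 hU
    exact ⟨⟨(I ^ k).toAddSubgroup, (isAdic_iff.1 hI).1 k⟩, hk⟩

theorem tsum_mem [IsTopologicalRing A] (hI : IsAdic I) {f : α → A} {k : ℕ}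
    (h : ∀ i, f i ∈ I ^ k) : ∑' i, f i ∈ I ^ k := by
  by_cases hf : Summable f
  · have hclosed := AddSubgroup.isClosed_of_isOpen (I ^ k).toAddSubgroup ((isAdic_iff.1 hI).1 k)
    exact hclosed.mem_of_tendsto hf.hasSum (Eventually.of_forall fun _ => sum_mem fun i _ => h i)
  · rw [tsum_eq_zero_of_not_summable hf]
    exact zero_mem _

theorem tsum_apply_apply_mem [IsTopologicalRing A] [T2Space A] (hI : IsAdic I) {β γ : Type*}
    {f : α → β → γ → A} {k : ℕ} {x : β} {y : γ} (h : ∀ i, f i x y ∈ I ^ k) :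
    (∑' i, f i) x y ∈ I ^ k := by
  by_cases hf : Summable f
  · rw [tsum_apply hf, tsum_apply (Pi.summable.1 hf x)]
    exact hI.tsum_mem h
  · rw [tsum_eq_zero_of_not_summable hf]
    exact zero_mem _

theorem eq_zero_of_forall_mem [T2Space A] (hI : IsAdic I) {x : A} (h : ∀ k, x ∈ I ^ k) :
    x = 0 :=
  tendsto_nhds_unique (tendsto_const_nhds (x := x) (f := (atTop : Filter ℕ)))
    (hI.tendsto_zero_iff.2 fun k => Eventually.of_forall fun _ => h k)

theorem summable_mul_of_tendsto_zero {R : Type*} [CommRing R] [UniformSpace R]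
    [IsUniformAddGroup R] [IsTopologicalRing R] [CompleteSpace R] {J : Ideal R} (hJ : IsAdic J)
    {f : ℕ → R} (hf : Tendsto f atTop (𝓝 0)) (g : ℕ → R) : Summable fun n => f n * g n :=
  haveI := hJ.nonarchimedeanRing
  NonarchimedeanAddGroup.summable_of_tendsto_cofinite_zero
    (Nat.cofinite_eq_atTop ▸ hJ.tendsto_mul_of_tendsto_zero hf g)

end IsAdic

theorem Matrix.mulVec_apply_mem {R ι : Type*} [CommRing R] [Fintype ι] {J : Ideal R}
    (M : Matrix ι ι R) {v : ι → R} (h : ∀ i, v i ∈ J) (j : ι) : (M *ᵥ v) j ∈ J :=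
  J.sum_mem fun i _ => J.mul_mem_left _ (h i)

def tailOp {A ι : Type*} [CommRing A] [TopologicalSpace A] [Fintype ι]
    (Q : ℕ → Matrix ι ι A) (e : A) (b : ℕ → ι → A) : ℕ → ι → A :=
  fun n j => ∑' m, e ^ (m + 1) * (Q (m + 1) *ᵥ b (n + m + 1)) j

section TailOperator

variable {A : Type*} [CommRing A] [TopologicalSpace A] [IsTopologicalRing A] {I : Ideal A}
  {ι : Type*} [Fintype ι]

theorem tailOp_mem (hI : IsAdic I) (Q : ℕ → Matrix ι ι A) (e : A) {b : ℕ → ι → A} {N κ : ℕ}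
    (h : ∀ n ≥ N, ∀ j, b n j ∈ I ^ κ) : ∀ n ≥ N, ∀ j, tailOp Q e b n j ∈ I ^ κ :=
  fun n hn j => hI.tsum_mem fun m =>
    Ideal.mul_mem_left _ _ ((Q (m + 1)).mulVec_apply_mem (fun i => h _ (by omega) i) j)

theorem tendsto_add_tailOp (hI : IsAdic I) (Q : ℕ → Matrix ι ι A) (e : A) {b : ℕ → ι → A}
    (hb : Tendsto b atTop (𝓝 0)) : Tendsto (b + tailOp Q e b) atTop (𝓝 0) := by
  rw [hI.tendsto_pi_zero_iff] at hb ⊢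
  intro κ
  obtain ⟨N, hN⟩ := eventually_atTop.1 (hb κ)
  exact eventually_atTop.2 ⟨N, fun n hn j =>
    add_mem (hN n hn j) (tailOp_mem hI Q e hN n hn j)⟩

theorem iterate_neg_tailOp_mem (hI : IsAdic I) (Q : ℕ → Matrix ι ι A) (e : A)
    {x : ℕ → ι → A} {N κ : ℕ} (h : ∀ n ≥ N, ∀ j, x n j ∈ I ^ κ) (k : ℕ) :
    ∀ n ≥ N, ∀ j, ((-tailOp Q e)^[k] x) n j ∈ I ^ κ := by
  induction k with
  | zero => exact h
  | succ k ih =>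
    rw [Function.iterate_succ']
    exact fun n hn j => neg_mem (tailOp_mem hI Q e ih n hn j)

def oneAddTailOpInv (Q : ℕ → Matrix ι ι A) (e : A) (a : ℕ → ι → A) : ℕ → ι → A :=
  ∑' k, (-tailOp Q e)^[k] a

theorem tendsto_oneAddTailOpInv [T2Space A] (hI : IsAdic I) (Q : ℕ → Matrix ι ι A) (e : A)
    {a : ℕ → ι → A} (ha : Tendsto a atTop (𝓝 0)) :
    Tendsto (oneAddTailOpInv Q e a) atTop (𝓝 0) := by
  rw [hI.tendsto_pi_zero_iff] at ha ⊢
  intro κ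
  obtain ⟨N, hN⟩ := eventually_atTop.1 (ha κ)
  exact eventually_atTop.2 ⟨N, fun n hn j => hI.tsum_apply_apply_mem fun k =>
    iterate_neg_tailOp_mem hI Q e hN k n hn j⟩

end TailOperator

section TailOperatorComplete

variable {A : Type*} [CommRing A] [UniformSpace A] [IsUniformAddGroup A] [IsTopologicalRing A]
  [CompleteSpace A] {I : Ideal A} {ι : Type*} [Fintype ι] {e : A}

theorem summable_tailOp_term (hI : IsAdic I) (he : Tendsto (e ^ ·) atTop (𝓝 0))
    (Q : ℕ → Matrix ι ι A) (b : ℕ → ι → A) (n : ℕ) (j : ι) :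
    Summable fun m => e ^ (m + 1) * (Q (m + 1) *ᵥ b (n + m + 1)) j :=
  hI.summable_mul_of_tendsto_zero ((tendsto_add_atTop_iff_nat 1).2 he) _

variable [T2Space A]

theorem tailOp_add (hI : IsAdic I) (he : Tendsto (e ^ ·) atTop (𝓝 0))
    (Q : ℕ → Matrix ι ι A) (b b' : ℕ → ι → A) :
    tailOp Q e (b + b') = tailOp Q e b + tailOp Q e b' := by
  ext n j
  simp only [tailOp, Pi.add_apply, mulVec_add, mul_add]
  exact (summable_tailOp_term hI he Q b n j).tsum_add (summable_tailOp_term hI he Q b' n j)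

theorem tailOp_sub (hI : IsAdic I) (he : Tendsto (e ^ ·) atTop (𝓝 0))
    (Q : ℕ → Matrix ι ι A) (b b' : ℕ → ι → A) :
    tailOp Q e (b - b') = tailOp Q e b - tailOp Q e b' :=
  map_sub (AddMonoidHom.mk' (tailOp Q e) (tailOp_add hI he Q)) b b'

theorem tailOp_sum (hI : IsAdic I) (he : Tendsto (e ^ ·) atTop (𝓝 0))
    (Q : ℕ → Matrix ι ι A) {β : Type*} (s : Finset β)
    (b : β → ℕ → ι → A) : tailOp Q e (∑ k ∈ s, b k) = ∑ k ∈ s, tailOp Q e (b k) :=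
  map_sum (AddMonoidHom.mk' (tailOp Q e) (tailOp_add hI he Q)) b s

theorem tailOp_smul (hI : IsAdic I) (he : Tendsto (e ^ ·) atTop (𝓝 0))
    (Q : ℕ → Matrix ι ι A) (c : A) (b : ℕ → ι → A) :
    tailOp Q e (c • b) = c • tailOp Q e b := by
  ext n j
  simp only [tailOp, Pi.smul_apply, mulVec_smul, smul_eq_mul, mul_left_comm _ c]
  exact (summable_tailOp_term hI he Q b n j).tsum_mul_left c

theorem exists_tailOp_eq_smul (hI : IsAdic I) (he : Tendsto (e ^ ·) atTop (𝓝 0))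
    (Q : ℕ → Matrix ι ι A) (b : ℕ → ι → A) :
    ∃ b', tailOp Q e b = e • b' :=
  ⟨fun n j => ∑' m, e ^ m * (Q (m + 1) *ᵥ b (n + m + 1)) j, by
    ext n j
    simp only [tailOp, Pi.smul_apply, smul_eq_mul, pow_succ', mul_assoc]
    exact (hI.summable_mul_of_tendsto_zero he _).tsum_mul_left e⟩

theorem exists_iterate_neg_tailOp_eq_pow_smul (hI : IsAdic I) (he : Tendsto (e ^ ·) atTop (𝓝 0))
    (Q : ℕ → Matrix ι ι A) (x : ℕ → ι → A) (k : ℕ) :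
    ∃ Y, (-tailOp Q e)^[k] x = e ^ k • Y := by
  induction k with
  | zero => exact ⟨x, by simp⟩
  | succ k ih =>
    obtain ⟨Y, hY⟩ := ih
    obtain ⟨Y', hY'⟩ := exists_tailOp_eq_smul hI he Q Y
    refine ⟨-Y', ?_⟩
    rw [Function.iterate_succ_apply', hY, Pi.neg_apply, tailOp_smul hI he Q, hY', smul_smul,
      ← pow_succ, smul_neg]

theorem eventually_iterate_neg_tailOp_mem (hI : IsAdic I) (he : Tendsto (e ^ ·) atTop (𝓝 0))
    (Q : ℕ → Matrix ι ι A) (x : ℕ → ι → A) (κ : ℕ) :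
    ∀ᶠ k in atTop, ∀ n j, ((-tailOp Q e)^[k] x) n j ∈ I ^ κ :=
  (hI.tendsto_zero_iff.1 he κ).mono fun k hk n j => by
    obtain ⟨Y, hY⟩ := exists_iterate_neg_tailOp_eq_pow_smul hI he Q x k
    rw [hY]
    exact Ideal.mul_mem_right _ _ hk

theorem summable_iterate_neg_tailOp (hI : IsAdic I) (he : Tendsto (e ^ ·) atTop (𝓝 0))
    (Q : ℕ → Matrix ι ι A) (x : ℕ → ι → A) :
    Summable fun k => (-tailOp Q e)^[k] x := by
  choose Y hY using exists_iterate_neg_tailOp_eq_pow_smul hI he Q x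
  simp only [hY]
  exact Pi.summable.2 fun n => Pi.summable.2 fun j =>
    hI.summable_mul_of_tendsto_zero he fun k => Y k n j

theorem eq_of_add_tailOp_eq (hI : IsAdic I) (he : Tendsto (e ^ ·) atTop (𝓝 0))
    (Q : ℕ → Matrix ι ι A) {b b' : ℕ → ι → A}
    (h : b + tailOp Q e b = b' + tailOp Q e b') : b = b' := by
  have hfix : (-tailOp Q e) (b - b') = b - b' := by
    rw [Pi.neg_apply, tailOp_sub hI he Q]
    linear_combination -h
  refine sub_eq_zero.1 (funext₂ fun n j => hI.eq_zero_of_forall_mem fun κ => ?_)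
  obtain ⟨k, hk⟩ := (eventually_iterate_neg_tailOp_mem hI he Q (b - b') κ).exists
  simpa only [Function.iterate_fixed hfix] using hk n j

theorem oneAddTailOpInv_add_tailOp (hI : IsAdic I) (he : Tendsto (e ^ ·) atTop (𝓝 0))
    (Q : ℕ → Matrix ι ι A) (a : ℕ → ι → A) :
    oneAddTailOpInv Q e a + tailOp Q e (oneAddTailOpInv Q e a) = a := by
  set S := -tailOp Q e
  refine sub_eq_zero.1 (funext₂ fun n j => hI.eq_zero_of_forall_mem fun κ => ?_)
  obtain ⟨K, hK⟩ := (eventually_iterate_neg_tailOp_mem hI he Q a κ).exists_forall_of_atTop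
  set R := ∑' k, S^[k + K] a
  have hR : ∀ n j, R n j ∈ I ^ κ := fun n j =>
    hI.tsum_apply_apply_mem fun k => hK (k + K) (by omega) n j
  have hTR := tailOp_mem hI Q e (N := 0) (fun n _ => hR n) n (Nat.zero_le _) j
  have hT : ∀ k, tailOp Q e (S^[k] a) = -S^[k + 1] a := fun k => by
    rw [Function.iterate_succ_apply']
    exact (neg_neg _).symm
  have htele := Finset.sum_range_sub' (fun k => S^[k] a) K
  rw [Function.iterate_zero_apply, Finset.sum_sub_distrib] at htele
  -- `1 + tailOp` telescopes the partial sum `Σ_{k<K} S^[k] a` to `a - S^[K] a`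
  have hsplit : oneAddTailOpInv Q e a + tailOp Q e (oneAddTailOpInv Q e a) - a
      = R + tailOp Q e R - S^[K] a := by
    rw [oneAddTailOpInv, ← (summable_iterate_neg_tailOp hI he Q a).sum_add_tsum_nat_add K,
      tailOp_add hI he Q, tailOp_sum hI he Q, Finset.sum_congr rfl fun k _ => hT k,
      Finset.sum_neg_distrib]
    linear_combination htele
  rw [hsplit]
  exact sub_mem (add_mem (hR n j) hTR) (hK K le_rfl n j)

end TailOperatorComplete

theorem stmt_17_general (p : ℕ) (r : ℕ)
    (A : Type*) [CommRing A] [UniformSpace A] [IsUniformAddGroup A]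
    [IsTopologicalRing A] [CompleteSpace A] [T2Space A]
    (hadic : IsAdic (Ideal.span {(p : A)}))
    (ρq : ℕ → A)
    (e : A) (he : Tendsto (fun n : ℕ => e ^ n) atTop (𝓝 0))
    (P : Matrix (Fin r) (Fin r) A) :
    (∀ b : ℕ → Fin r → A, Tendsto b atTop (𝓝 0) →
      gV A r P ρq e b 0 = 0 ∧ Tendsto (gV A r P ρq e b) atTop (𝓝 0)) ∧
    Set.InjOn (gV A r P ρq e) {b | Tendsto b atTop (𝓝 0)} ∧
    Set.SurjOn (gV A r P ρq e) {b | Tendsto b atTop (𝓝 0)}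
      {a | Tendsto a atTop (𝓝 0) ∧ a 0 = 0} := by
  have gV_succ : ∀ b n, gV A r P ρq e b (n + 1) = (b + tailOp (QQmat A r P ρq) e b) n :=
    fun _ _ => rfl
  refine ⟨fun b hb => ⟨rfl, ?_⟩, fun b _ b' _ h => ?_, fun a ⟨ha, ha0⟩ => ?_⟩
  · exact (tendsto_add_atTop_iff_nat 1).1 <| by
      simpa only [gV_succ] using tendsto_add_tailOp hadic (QQmat A r P ρq) e hb
  · exact eq_of_add_tailOp_eq hadic he _ (funext fun n => by rw [← gV_succ, ← gV_succ, h])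
  · refine ⟨oneAddTailOpInv (QQmat A r P ρq) e (fun n => a (n + 1)),
      tendsto_oneAddTailOpInv hadic _ e ((tendsto_add_atTop_iff_nat 1).2 ha), funext fun n => ?_⟩
    cases n with
    | zero => exact ha0.symm
    | succ n => rw [gV_succ, oneAddTailOpInv_add_tailOp hadic he]

/-- Let `A` be a `p`-adically complete `p`-torsion-free `𝒪_C`-algebra,
`ρ` with `v_p(ρ) ≥ 1/(p−1)`, `e ∈ A` topologically nilpotent and a non-zero-divisor, and
`V = A^r` with `γ` acting by `P = exp(−(ζ_p−1)Θ)`, `Θ` topologically nilpotent.  With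
`M_0(V)` the module of coefficient sequences tending to `0` and
`M_0^+(V)` those with vanishing constant term, the map `g_V` above takes values in
`M_0^+(V)` and induces an `A`-module isomorphism `g_V : M_0(V) → M_0^+(V)`. -/
theorem stmt_17 (p : ℕ) [Fact (Nat.Prime p)] (r : ℕ)
    (A : Type*) [CommRing A] [UniformSpace A] [IsUniformAddGroup A]
    [IsTopologicalRing A] [CompleteSpace A] [T2Space A]
    [Algebra ℤ_[p] A]
    (hadic : IsAdic (Ideal.span {(p : A)}))
    (htor : ∀ x : A, (p : A) * x = 0 → x = 0)
    (ρ : A) (hρsmall : ∃ c : A, ρ ^ (p - 1) = (p : A) * c)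
    (hρreg : ∀ x : A, ρ * x = 0 → x = 0)
    (ρpd : ℕ → A) (hρpd0 : ρpd 0 = 1) (hρpd1 : ρpd 1 = ρ)
    (hρpdfac : ∀ m : ℕ, (m.factorial : A) * ρpd m = ρ ^ m)
    (ρq : ℕ → A) (hρq : ∀ k : ℕ, ρ * ρq k = ρpd (k + 1))
    (e : A) (he : Tendsto (fun n : ℕ => e ^ n) atTop (𝓝 0))
    (hereg : ∀ x : A, e * x = 0 → x = 0)
    (ζ : A) (hζ : IsPrimitiveRoot ζ p)
    (εpd : ℕ → A) (hεpd0 : εpd 0 = 1) (hεpd1 : εpd 1 = ζ - 1)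
    (hεpdfac : ∀ k : ℕ, (k.factorial : A) * εpd k = (ζ - 1) ^ k)
    (Θ : Matrix (Fin r) (Fin r) A)
    (hΘ : ∀ i j, Tendsto (fun n : ℕ => (Θ ^ n) i j) atTop (𝓝 0))
    (P : Matrix (Fin r) (Fin r) A)
    (hP : ∀ i j, HasSum (fun l : ℕ => ((-1 : A) ^ l * εpd l) * (Θ ^ l) i j) (P i j)) :
    (∀ b : ℕ → Fin r → A, Tendsto b atTop (𝓝 0) →
      gV A r P ρq e b 0 = 0 ∧ Tendsto (gV A r P ρq e b) atTop (𝓝 0)) ∧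
    Set.InjOn (gV A r P ρq e) {b | Tendsto b atTop (𝓝 0)} ∧
    Set.SurjOn (gV A r P ρq e) {b | Tendsto b atTop (𝓝 0)}
      {a | Tendsto a atTop (𝓝 0) ∧ a 0 = 0} :=
  stmt_17_general p r A hadic ρq e he P
end
end

section
/- Let V₀ be a finite free R⁺-module of rank r with commuting topologically nilpotent Θ_1,…,Θ_d ∈ M_r(R⁺), γ_i acting by exp(−(ζ_p−1)Θ_i), and M = V₀ ⊗_{R⁺} R⁺[ρY_1,…,ρY_d]^∧_pd with Higgs field Θ_M = Σ_i ∂/∂Y_i ⊗ (dlog T_i)/t and diagonal Γ-action (γ_i(Y_j) = Y_j + δ_{ij}(ζ_p−1)). Suppose x_1,…,x_d ∈ H := M^Γ satisfy Θ_i(x_j) = Θ_j(x_i) for all i,j (so ω = Σ x_i ⊗ ρ dlog T_i/t is a degree-1 Higgs cocycle). If m(ω) ∈ M satisfies Θ_M(m(ω)) = ω (with zero constant term), then for each i, (γ_i − 1)(m(ω)) = −ρ(ζ_p−1) F(Θ_i) exp(−Σ_k Θ_k Y_k) x_i, where F(X) = (exp(−(ζ_p−1)X) − 1)/((ζ_p−1)X).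 Consequently the image of ω in H^1(Γ, V₀) lies in ρ(ζ_p−1)·H^1(Γ, V₀). -/
/-!
Since `Θ_i x_j = Θ_j x_i`, the recursion for `m = m(ω)` has the closed solution
`m(n + e_i) = (-1)^{|n|} Ξ^n x_i`, i.e. `∂m/∂Y_i = ρ exp(-Σ_k Θ_k Y_k) x_i`. The automorphism
`γ_i` shifts `Y_i` by `ε = ζ_p - 1`, so it acts on coefficients by a divided-power binomial series;
along the `e_i`-direction the closed form turns this series into the exponential series of
`-εΘ_i`, leaving `(γ_i - 1) m = -ρε F(Θ_i) exp(-Σ_k Θ_k Y_k) x_i`. Matching `ρ^{[k]} ε^k` with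
`ρ^k ε^{[k]}` requires cancelling `k!`, which works because `p` is a nonzerodivisor and every other
prime is a unit of `ℤ_p`. Finally `γ_i - 1 = ε Θ_i F(Θ_i)` on `V₀` and all these operators
commute, so `u_i = -F(Θ_i) x_i` is a Koszul 1-cocycle.
-/

open Filter Topology

noncomputable section

/-- The coefficients of `exp(−Σ_k Θ_k Y_k)·v` in `M = V₀ ⊗ R⁺[ρY₁,…,ρY_d]^∧_pd` (w.r.t. the
basis `ρ^{|n|}Y^{[n]}`, and writing `Θ_k = ρ Ξ_k`): the coefficient at the multi-index `n`
is `(−1)^{|n|} (∏_k Ξ_k^{n_k}) v`. -/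
def embedC (R : Type*) [CommRing R] (r d : ℕ) (Ξ : Fin d → Matrix (Fin r) (Fin r) R)
    (v : Fin r → R) (n : Fin d → ℕ) : Fin r → R :=
  ((-1 : R) ^ (∑ k, n k)) • ((List.ofFn (fun k => (Ξ k) ^ (n k))).prod).mulVec v

open Matrix

theorem isLeftRegular_natCast_of_isLeftRegular_prime {p : ℕ} [Fact p.Prime] {R : Type*}
    [CommRing R] [Algebra ℤ_[p] R] (hp : IsLeftRegular (p : R)) {N : ℕ}
    (hN : N ≠ 0) : IsLeftRegular (N : R) := by
  obtain ⟨e, N', hN', rfl⟩ :=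
    Nat.exists_eq_pow_mul_and_not_dvd hN p (Fact.out : p.Prime).ne_one
  have hunit : IsUnit (N' : ℤ_[p]) := PadicInt.isUnit_iff.mpr
    (PadicInt.norm_natCast_eq_one_iff.mpr ((Nat.Prime.coprime_iff_not_dvd Fact.out).mpr hN'))
  rw [Nat.cast_mul, Nat.cast_pow, ← map_natCast (algebraMap ℤ_[p] R) N']
  exact (hp.pow e).mul (hunit.map _).isRegular.left

theorem mul_pow_eq_pow_mul_of_factorial_mul {R : Type*} [CommRing R] {k : ℕ}
    (hk : IsLeftRegular (k.factorial : R)) {a b x y : R}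
    (ha : k.factorial * a = x ^ k) (hb : k.factorial * b = y ^ k) :
    a * y ^ k = x ^ k * b :=
  hk <| by
    dsimp only
    rw [← mul_assoc, ha, mul_left_comm, hb]

theorem List.prod_ofFn_update_mul {M : Type*} [Monoid M] :
    ∀ {d : ℕ} (f : Fin d → M) (j : Fin d) (x : M), (∀ k, Commute x (f k)) →
      (List.ofFn (Function.update f j (x * f j))).prod = x * (List.ofFn f).prod
  | _ + 1, f, j, x, h => by
    rw [List.ofFn_succ, List.ofFn_succ, List.prod_cons, List.prod_cons]
    cases j using Fin.cases with
    | zero => simp [mul_assoc]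
    | succ j =>
      have htail : (fun i : Fin _ => Function.update f j.succ (x * f j.succ) i.succ)
          = Function.update (fun i => f i.succ) j (x * f j.succ) :=
        Function.update_comp_eq_of_injective f (Fin.succ_injective _) j _
      rw [Function.update_of_ne (Fin.succ_ne_zero j).symm, htail,
        prod_ofFn_update_mul _ j x fun k => h k.succ, ← mul_assoc, ← mul_assoc, (h 0).eq]

theorem Finset.sum_update_succ {ι : Type*} [Fintype ι] [DecidableEq ι] (n : ι → ℕ) (i : ι) :
    ∑ t, Function.update n i (n i + 1) t = ∑ t, n t + 1 := by
  rw [Finset.sum_update_of_mem (Finset.mem_univ i), Finset.sdiff_singleton_eq_erase,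
    ← Finset.add_sum_erase _ n (Finset.mem_univ i)]
  ring

theorem Function.update_succ_induction {ι : Type*} [Fintype ι] [DecidableEq ι]
    {P : (ι → ℕ) → Prop} (zero : P 0)
    (update_succ : ∀ n i, P n → P (Function.update n i (n i + 1))) (n : ι → ℕ) : P n := by
  induction hs : ∑ i, n i generalizing n with
  | zero =>
    obtain rfl : n = 0 := funext <| by simpa [Finset.sum_eq_zero_iff] using hs
    exact zero
  | succ s ih =>
    obtain ⟨j, hj⟩ : ∃ j, n j ≠ 0 := by
      by_contra! h
      simp [h] at hs
    have hn : Function.update (Function.update n j (n j - 1)) j (n j - 1 + 1) = n := by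
      rw [Function.update_idem, Nat.sub_add_cancel (Nat.pos_of_ne_zero hj),
        Function.update_eq_self]
    have hsum := Finset.sum_update_succ (Function.update n j (n j - 1)) j
    rw [Function.update_self, hn] at hsum
    have key := update_succ _ j (ih (Function.update n j (n j - 1)) (by omega))
    rwa [Function.update_self, hn] at key

section PowerSeries

variable {R A : Type*} [CommRing R] [Ring A] [Algebra R A] [TopologicalSpace A]
  [IsTopologicalRing A] [T2Space A]

theorem Commute.of_hasSum_smul_pow {c : ℕ → R} {T F C : A}
    (hF : HasSum (fun l => c l • T ^ l) F) (hC : Commute T C) : Commute F C :=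
  hF.tsum_eq ▸ Commute.tsum_left C fun l => (hC.pow_left l).smul_left _

/-- `exp(-e T) - 1 = e T F(T)` for `F(X) = (exp(-e X) - 1)/(e X)`, written with divided powers
`epd l = e^l / l!` and `eq l = e^l / (l+1)!`. -/
theorem sub_one_eq_smul_mul_of_hasSum [ContinuousConstSMul R A] {T E F : A} {e : R}
    {epd eq : ℕ → R} (h0 : epd 0 = 1) (hq : ∀ k, e * eq k = epd (k + 1))
    (hE : HasSum (fun l => ((-1) ^ l * epd l) • T ^ l) E)
    (hF : HasSum (fun l => ((-1) ^ (l + 1) * eq l) • T ^ l) F) :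
    E - 1 = e • (T * F) := by
  have hshift : HasSum (fun l => ((-1) ^ (l + 1) * epd (l + 1)) • T ^ (l + 1)) (E - 1) := by
    simpa [h0] using (hasSum_nat_add_iff' 1).mpr hE
  have hterm : (fun l => e • (T * ((-1) ^ (l + 1) * eq l) • T ^ l))
      = fun l => ((-1) ^ (l + 1) * epd (l + 1)) • T ^ (l + 1) := by
    funext l
    rw [mul_smul_comm, smul_smul, ← pow_succ', ← hq, mul_left_comm]
  exact hshift.unique (hterm ▸ (hF.mul_left T).const_smul e)

end PowerSeries

section embedC

variable {R : Type*} [CommRing R] {r d : ℕ} {Ξ : Fin d → Matrix (Fin r) (Fin r) R}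

theorem embedC_zero (v : Fin r → R) : embedC R r d Ξ v 0 = v := by
  simp [embedC]

theorem embedC_neg (v : Fin r → R) (n : Fin d → ℕ) :
    embedC R r d Ξ (-v) n = -embedC R r d Ξ v n := by
  simp [embedC, mulVec_neg]

theorem Matrix.mulVec_embedC {C : Matrix (Fin r) (Fin r) R} (hC : ∀ k, Commute C (Ξ k))
    (v : Fin r → R) (n : Fin d → ℕ) :
    C *ᵥ embedC R r d Ξ v n = embedC R r d Ξ (C *ᵥ v) n := by
  have hprod : Commute C (List.ofFn fun k => Ξ k ^ n k).prod :=
    Commute.list_prod_right _ _ fun _ hy => by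
      obtain ⟨k, rfl⟩ := List.mem_ofFn.mp hy
      exact (hC k).pow_right _
  unfold embedC
  rw [mulVec_smul, mulVec_mulVec, hprod.eq, ← mulVec_mulVec]

theorem embedC_update_succ (hΞ : ∀ i j, Commute (Ξ i) (Ξ j)) (v : Fin r → R)
    (n : Fin d → ℕ) (i : Fin d) :
    embedC R r d Ξ v (Function.update n i (n i + 1)) = -(Ξ i *ᵥ embedC R r d Ξ v n) := by
  have hpow : (fun k => Ξ k ^ Function.update n i (n i + 1) k)
      = Function.update (fun k => Ξ k ^ n k) i (Ξ i * Ξ i ^ n i) := by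
    funext k
    by_cases hk : k = i
    · subst hk; simp [pow_succ']
    · simp [hk]
  unfold embedC
  rw [hpow, List.prod_ofFn_update_mul _ _ _ fun k => (hΞ i k).pow_right _,
    Finset.sum_update_succ, mulVec_smul, ← mulVec_mulVec, pow_succ, mul_neg_one,
    neg_smul]

theorem embedC_update_add (hΞ : ∀ i j, Commute (Ξ i) (Ξ j)) (v : Fin r → R)
    (n : Fin d → ℕ) (i : Fin d) (k : ℕ) :
    embedC R r d Ξ v (Function.update n i (n i + k))
      = (-1 : R) ^ k • (Ξ i ^ k *ᵥ embedC R r d Ξ v n) := by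
  induction k with
  | zero => simp
  | succ k ih =>
    have h := embedC_update_succ hΞ v (Function.update n i (n i + k)) i
    rw [Function.update_idem, Function.update_self, ih, add_assoc] at h
    rw [h, mulVec_smul, mulVec_mulVec, ← pow_succ', pow_succ (-1 : R),
      mul_neg_one, neg_smul]

end embedC

section HiggsPrimitive

variable {R : Type*} [CommRing R] {r d : ℕ} {Ξ : Fin d → Matrix (Fin r) (Fin r) R}
  {x : Fin d → Fin r → R} {m : (Fin d → ℕ) → Fin r → R}

/-- The coefficients, in the basis `ρ^{|n|} Y^{[n]}` and with `Θ_i = ρ Ξ_i`, of a solution of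
`Θ_M(m) = Σ_i x_i ⊗ ρ dlog T_i / t` with zero constant term. -/
structure IsHiggsPrimitive (Ξ : Fin d → Matrix (Fin r) (Fin r) R) (x : Fin d → Fin r → R)
    (m : (Fin d → ℕ) → Fin r → R) : Prop where
  zero : m 0 = 0
  update_succ : ∀ i n, m (Function.update n i (n i + 1)) = (if n = 0 then x i else 0) - Ξ i *ᵥ m n

/-- The cocycle condition `Ξ_i x_j = Ξ_j x_i` is what makes the two ways of reaching
`n + e_i + e_j` in the recursion agree. -/
theorem IsHiggsPrimitive.update_succ_eq_embedC (hm : IsHiggsPrimitive Ξ x m)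
    (hΞ : ∀ i j, Commute (Ξ i) (Ξ j)) (hx : ∀ i j, Ξ i *ᵥ x j = Ξ j *ᵥ x i)
    (n : Fin d → ℕ) (i : Fin d) :
    m (Function.update n i (n i + 1)) = embedC R r d Ξ (x i) n := by
  induction n using Function.update_succ_induction generalizing i with
  | zero => rw [hm.update_succ, if_pos rfl, hm.zero, mulVec_zero, sub_zero, embedC_zero]
  | update_succ n j ih =>
    have hne : Function.update n j (n j + 1) ≠ 0 := fun h => by simpa using congrFun h j
    rw [hm.update_succ, if_neg hne, zero_sub, ih, mulVec_embedC (hΞ i), hx i j,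
      ← mulVec_embedC (hΞ j), embedC_update_succ hΞ]

theorem IsHiggsPrimitive.update_add_succ (hm : IsHiggsPrimitive Ξ x m)
    (hΞ : ∀ i j, Commute (Ξ i) (Ξ j)) (hx : ∀ i j, Ξ i *ᵥ x j = Ξ j *ᵥ x i)
    (n : Fin d → ℕ) (i : Fin d) (k : ℕ) :
    m (Function.update n i (n i + (k + 1)))
      = (-1 : R) ^ k • (Ξ i ^ k *ᵥ embedC R r d Ξ (x i) n) := by
  have h := hm.update_succ_eq_embedC hΞ hx (Function.update n i (n i + k)) i
  rw [Function.update_idem, Function.update_self, add_assoc] at h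
  rw [h, embedC_update_add hΞ]

/-- `∑ₖ ρ^{[k]} ε^k m(n + k e_i)` is the `n`-th coefficient of `γ_i m`. -/
theorem IsHiggsPrimitive.hasSum_gamma [TopologicalSpace R] [IsTopologicalRing R]
    (hm : IsHiggsPrimitive Ξ x m)
    (hΞ : ∀ i j, Commute (Ξ i) (Ξ j)) (hx : ∀ i j, Ξ i *ᵥ x j = Ξ j *ᵥ x i)
    {ρ ε : R} {ρpd εpd εq : ℕ → R} (hρpd0 : ρpd 0 = 1)
    (hcoef : ∀ k, ρpd k * ε ^ k = ρ ^ k * εpd k) (hq : ∀ k, ε * εq k = εpd (k + 1))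
    {i : Fin d} {F : Matrix (Fin r) (Fin r) R}
    (hF : HasSum (fun l => ((-1) ^ (l + 1) * εq l) • (ρ • Ξ i) ^ l) F) (n : Fin d → ℕ) :
    HasSum (fun k => (ρpd k * ε ^ k) • m (Function.update n i (n i + k)))
      (m n - (ρ * ε) • (F *ᵥ embedC R r d Ξ (x i) n)) := by
  set w := embedC R r d Ξ (x i) n
  have hterm : (fun l => -(ρ * ε) • (((-1) ^ (l + 1) * εq l) • (ρ • Ξ i) ^ l) *ᵥ w)
      = fun l => (ρpd (l + 1) * ε ^ (l + 1)) • m (Function.update n i (n i + (l + 1))) := by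
    funext l
    rw [hm.update_add_succ hΞ hx, hcoef, ← hq, smul_pow, smul_smul, smul_mulVec, smul_smul,
      smul_smul]
    congr 1
    ring
  have hshift := hterm ▸ ((hF.map (mulVec.addMonoidHomLeft w)
    (continuous_id.matrix_mulVec continuous_const)).const_smul (-(ρ * ε)))
  have h := (hasSum_nat_add_iff
    (f := fun k => (ρpd k * ε ^ k) • m (Function.update n i (n i + k))) 1).mp hshift
  rwa [Finset.sum_range_one, hρpd0, pow_zero, mul_one, one_smul, add_zero,
    Function.update_eq_self, neg_smul, neg_add_eq_sub] at h

end HiggsPrimitive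

def IsKoszulCocycle {ι R : Type*} [CommRing R] {r : ℕ} (P : ι → Matrix (Fin r) (Fin r) R)
    (u : ι → Fin r → R) : Prop :=
  ∀ i j, P i *ᵥ u j - u j = P j *ᵥ u i - u i

theorem isKoszulCocycle_neg_mulVec {ι R : Type*} [CommRing R] {r : ℕ}
    {P Θ F : ι → Matrix (Fin r) (Fin r) R} {e : R} {x : ι → Fin r → R}
    (hP : ∀ i, P i - 1 = e • (Θ i * F i)) (hΘF : ∀ i j, Commute (Θ i) (F j))
    (hFF : ∀ i j, Commute (F i) (F j)) (hx : ∀ i j, Θ i *ᵥ x j = Θ j *ᵥ x i) :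
    IsKoszulCocycle P fun i => -(F i *ᵥ x i) := by
  intro i j
  have key : ∀ a b, P a *ᵥ (-(F b *ᵥ x b)) - -(F b *ᵥ x b)
      = -(e • ((F a * F b) *ᵥ (Θ a *ᵥ x b))) := by
    intro a b
    rw [show ∀ v, P a *ᵥ v - v = (P a - 1) *ᵥ v from fun v => by rw [sub_mulVec, one_mulVec],
      hP, smul_mulVec, mulVec_neg, mulVec_mulVec, mul_assoc,
      ((hΘF a a).mul_right (hΘF a b)).eq, ← mulVec_mulVec, smul_neg]
  rw [key, key, hFF i j, hx i j]

theorem stmt_19_general (p : ℕ) [Fact (Nat.Prime p)]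
    (R : Type*) [CommRing R] [UniformSpace R]
    [IsTopologicalRing R] [T2Space R]
    [Algebra ℤ_[p] R]
    (htor : ∀ y : R, (p : R) * y = 0 → y = 0)
    (ρ : R)
    (hρreg : ∀ y : R, ρ * y = 0 → y = 0)
    (ρpd : ℕ → R) (hρpd0 : ρpd 0 = 1)
    (hρpdfac : ∀ k : ℕ, (k.factorial : R) * ρpd k = ρ ^ k)
    (ε : R)
    (εpd : ℕ → R) (hεpd0 : εpd 0 = 1)
    (hεpdfac : ∀ k : ℕ, (k.factorial : R) * εpd k = ε ^ k)
    (εq : ℕ → R) (hεq : ∀ k : ℕ, ε * εq k = εpd (k + 1))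
    (r d : ℕ)
    (Θ Ξ : Fin d → Matrix (Fin r) (Fin r) R)
    (hΘρ : ∀ i, Θ i = ρ • Ξ i)
    (hΘcomm : ∀ i j, Θ i * Θ j = Θ j * Θ i)
    (hΞcomm : ∀ i j, Ξ i * Ξ j = Ξ j * Ξ i)
    -- `P i = exp(−(ζ_p−1)Θ_i)`, the matrix of `γ_i` on `V₀`
    (P : Fin d → Matrix (Fin r) (Fin r) R)
    (hP : ∀ (i : Fin d) (a b : Fin r),
      HasSum (fun l : ℕ => ((-1 : R) ^ l * εpd l) * ((Θ i) ^ l) a b) ((P i) a b))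
    -- `F(Θ_i) = Σ_{n≥0} (−1)^{n+1} ((ζ_p−1)^n/(n+1)!) Θ_i^n`
    (Fmat : Fin d → Matrix (Fin r) (Fin r) R)
    (hF : ∀ (i : Fin d) (a b : Fin r),
      HasSum (fun l : ℕ => ((-1 : R) ^ (l + 1) * εq l) * ((Θ i) ^ l) a b) ((Fmat i) a b))
    -- the Higgs 1-cocycle `ω = Σ_i x_i ⊗ ρ dlog T_i / t`
    (x : Fin d → Fin r → R)
    (hx : ∀ i j, (Θ i).mulVec (x j) = (Θ j).mulVec (x i))
    -- `m(ω) ∈ M`, i.e. the coefficients of a solution of `Θ_M(m(ω)) = ω` with zero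
    -- constant term
    (m : (Fin d → ℕ) → Fin r → R)
    (hm0 : m 0 = 0)
    (hmrec : ∀ (i : Fin d) (n : Fin d → ℕ),
      m (Function.update n i (n i + 1))
        = (if n = 0 then x i else 0) - (Ξ i).mulVec (m n)) :
    -- `(γ_i − 1)(m(ω)) = −ρ(ζ_p−1)·F(Θ_i)·exp(−Σ_k Θ_k Y_k)·x_i`
    (∀ (i : Fin d) (n : Fin d → ℕ) (j : Fin r),
      (∑' k : ℕ, ρpd k * ε ^ k * m (Function.update n i (n i + k)) j) - m n j
        = -(ρ * ε) * ((Fmat i).mulVec (embedC R r d Ξ (x i) n)) j) ∧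
    -- consequently the class of `ω` in `H¹(Γ, V₀)` lies in `ρ(ζ_p−1)·H¹(Γ, V₀)`
    (∃ u : Fin d → Fin r → R,
      (∀ i i' : Fin d,
        (P i).mulVec (u i') - u i' = (P i').mulVec (u i) - u i) ∧
      ∀ (i : Fin d) (n : Fin d → ℕ) (j : Fin r),
        (∑' k : ℕ, ρpd k * ε ^ k * m (Function.update n i (n i + k)) j) - m n j
          = (ρ * ε) * (embedC R r d Ξ (u i) n) j) := by
  have hcoef : ∀ k, ρpd k * ε ^ k = ρ ^ k * εpd k := fun k =>
    mul_pow_eq_pow_mul_of_factorial_mul (isLeftRegular_natCast_of_isLeftRegular_prime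
      (isLeftRegular_of_non_zero_divisor _ htor) k.factorial_ne_zero) (hρpdfac k) (hεpdfac k)
  have hxΞ : ∀ i j, Ξ i *ᵥ x j = Ξ j *ᵥ x i := fun i j => funext fun a =>
    isLeftRegular_of_non_zero_divisor ρ hρreg <| by
      simpa only [hΘρ, smul_mulVec, Pi.smul_apply, smul_eq_mul] using congrFun (hx i j) a
  have hPser : ∀ i, HasSum (fun l => ((-1) ^ l * εpd l) • Θ i ^ l) (P i) := fun i =>
    Pi.hasSum.mpr fun a => Pi.hasSum.mpr (hP i a)
  have hFser : ∀ i, HasSum (fun l => ((-1) ^ (l + 1) * εq l) • Θ i ^ l) (Fmat i) := fun i =>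
    Pi.hasSum.mpr fun a => Pi.hasSum.mpr (hF i a)
  have hFcomm : ∀ i C, Commute (Θ i) C → Commute (Fmat i) C := fun i _ =>
    Commute.of_hasSum_smul_pow (hFser i)
  have hγ : ∀ (i : Fin d) (n : Fin d → ℕ) (j : Fin r),
      (∑' k : ℕ, ρpd k * ε ^ k * m (Function.update n i (n i + k)) j) - m n j
        = -(ρ * ε) * ((Fmat i).mulVec (embedC R r d Ξ (x i) n)) j := fun i n j => by
    have h := Pi.hasSum.mp ((IsHiggsPrimitive.mk hm0 hmrec).hasSum_gamma hΞcomm hxΞ hρpd0 hcoef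
      hεq (hΘρ i ▸ hFser i) n) j
    simp only [Pi.smul_apply, Pi.sub_apply, smul_eq_mul] at h
    rw [h.tsum_eq]
    ring
  refine ⟨hγ, fun i => -(Fmat i *ᵥ x i), ?_, fun i n j => ?_⟩
  · exact isKoszulCocycle_neg_mulVec
      (fun i => sub_one_eq_smul_mul_of_hasSum hεpd0 hεq (hPser i) (hFser i))
      (fun i j => (hFcomm j _ (hΘcomm j i)).symm)
      (fun i j => hFcomm i _ (hFcomm j _ (hΘcomm j i)).symm) hx
  · have hFΞ : ∀ k, Commute (Fmat i) (Ξ k) := fun k =>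
      hFcomm i _ (hΘρ i ▸ Commute.smul_left (hΞcomm i k) ρ)
    rw [hγ, embedC_neg, ← mulVec_embedC hFΞ]
    simp only [Pi.neg_apply]
    ring

/-- Let `V₀` be finite free of rank `r` over `R⁺` with commuting
topologically nilpotent `Θ_1,…,Θ_d = ρΞ_1,…,ρΞ_d`, `γ_i` acting by `exp(−(ζ_p−1)Θ_i)`, and
`M = V₀ ⊗ R⁺[ρY₁,…,ρY_d]^∧_pd` with Higgs field `Θ_M` and diagonal `Γ`-action
(`γ_i(Y_j) = Y_j + δ_{ij}(ζ_p−1)`, trivial on the fixed part `H = M^Γ`).  Suppose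
`x_1,…,x_d ∈ H` satisfy `Θ_i(x_j) = Θ_j(x_i)` (a degree-1 Higgs cocycle
`ω = Σ x_i ⊗ ρ dlog T_i/t`), and `m(ω) ∈ M` solves `Θ_M(m(ω)) = ω` with zero constant term
(the recursion `h_{n+1_i} = δ_{n,0}·x_i − ρ^{−1}Θ_i(h_n)`).  Then for each `i`,
`(γ_i − 1)(m(ω)) = −ρ(ζ_p−1) F(Θ_i) exp(−Σ_k Θ_k Y_k) x_i`, where
`F(X) = (exp(−(ζ_p−1)X) − 1)/((ζ_p−1)X)`; consequently the class of `ω` in `H¹(Γ, V₀)`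
lies in `ρ(ζ_p−1)·H¹(Γ, V₀)` (it is `ρ(ζ_p−1)` times the class of a Koszul 1-cocycle `u`). -/
theorem stmt_19 (p : ℕ) [Fact (Nat.Prime p)]
    (R : Type*) [CommRing R] [UniformSpace R] [IsUniformAddGroup R]
    [IsTopologicalRing R] [CompleteSpace R] [T2Space R]
    [Algebra ℤ_[p] R]
    (hadic : IsAdic (Ideal.span {(p : R)}))
    (htor : ∀ y : R, (p : R) * y = 0 → y = 0)
    (ρ : R) (hρsmall : ∃ c : R, ρ ^ (p - 1) = (p : R) * c)
    (hρreg : ∀ y : R, ρ * y = 0 → y = 0)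
    (ρpd : ℕ → R) (hρpd0 : ρpd 0 = 1) (hρpd1 : ρpd 1 = ρ)
    (hρpdfac : ∀ k : ℕ, (k.factorial : R) * ρpd k = ρ ^ k)
    (ζ : R) (hζ : IsPrimitiveRoot ζ p) (ε : R) (hε : ε = ζ - 1)
    (εpd : ℕ → R) (hεpd0 : εpd 0 = 1) (hεpd1 : εpd 1 = ε)
    (hεpdfac : ∀ k : ℕ, (k.factorial : R) * εpd k = ε ^ k)
    (εq : ℕ → R) (hεq : ∀ k : ℕ, ε * εq k = εpd (k + 1))
    (r d : ℕ)
    (Θ Ξ : Fin d → Matrix (Fin r) (Fin r) R)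
    (hΘρ : ∀ i, Θ i = ρ • Ξ i)
    (hΘcomm : ∀ i j, Θ i * Θ j = Θ j * Θ i)
    (hΞcomm : ∀ i j, Ξ i * Ξ j = Ξ j * Ξ i)
    (hΘnil : ∀ (i : Fin d) (a b : Fin r),
      Tendsto (fun n : ℕ => ((Θ i) ^ n) a b) atTop (𝓝 0))
    -- `P i = exp(−(ζ_p−1)Θ_i)`, the matrix of `γ_i` on `V₀`
    (P : Fin d → Matrix (Fin r) (Fin r) R)
    (hP : ∀ (i : Fin d) (a b : Fin r),
      HasSum (fun l : ℕ => ((-1 : R) ^ l * εpd l) * ((Θ i) ^ l) a b) ((P i) a b))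
    -- `F(Θ_i) = Σ_{n≥0} (−1)^{n+1} ((ζ_p−1)^n/(n+1)!) Θ_i^n`
    (Fmat : Fin d → Matrix (Fin r) (Fin r) R)
    (hF : ∀ (i : Fin d) (a b : Fin r),
      HasSum (fun l : ℕ => ((-1 : R) ^ (l + 1) * εq l) * ((Θ i) ^ l) a b) ((Fmat i) a b))
    -- the Higgs 1-cocycle `ω = Σ_i x_i ⊗ ρ dlog T_i / t`
    (x : Fin d → Fin r → R)
    (hx : ∀ i j, (Θ i).mulVec (x j) = (Θ j).mulVec (x i))
    -- `m(ω) ∈ M`, i.e. the coefficients of a solution of `Θ_M(m(ω)) = ω` with zero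
    -- constant term
    (m : (Fin d → ℕ) → Fin r → R)
    (hmM : Tendsto m cofinite (𝓝 0))
    (hm0 : m 0 = 0)
    (hmrec : ∀ (i : Fin d) (n : Fin d → ℕ),
      m (Function.update n i (n i + 1))
        = (if n = 0 then x i else 0) - (Ξ i).mulVec (m n)) :
    -- `(γ_i − 1)(m(ω)) = −ρ(ζ_p−1)·F(Θ_i)·exp(−Σ_k Θ_k Y_k)·x_i`
    (∀ (i : Fin d) (n : Fin d → ℕ) (j : Fin r),
      (∑' k : ℕ, ρpd k * ε ^ k * m (Function.update n i (n i + k)) j) - m n j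
        = -(ρ * ε) * ((Fmat i).mulVec (embedC R r d Ξ (x i) n)) j) ∧
    -- consequently the class of `ω` in `H¹(Γ, V₀)` lies in `ρ(ζ_p−1)·H¹(Γ, V₀)`
    (∃ u : Fin d → Fin r → R,
      (∀ i i' : Fin d,
        (P i).mulVec (u i') - u i' = (P i').mulVec (u i) - u i) ∧
      ∀ (i : Fin d) (n : Fin d → ℕ) (j : Fin r),
        (∑' k : ℕ, ρpd k * ε ^ k * m (Function.update n i (n i + k)) j) - m n j
          = (ρ * ε) * (embedC R r d Ξ (u i) n) j) :=
  stmt_19_general p R htor ρ hρreg ρpd hρpd0 hρpdfac ε εpd hεpd0 hεpdfac εq hεq r d Θ Ξ hΘρ hΘcomm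
    hΞcomm P hP Fmat hF x hx m hm0 hmrec

end
end
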